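/- Let z be a nonzero homogeneous element of degree ±1 in the first Weyl algebra A₁ (i.e., z ∈ D_1 or z ∈ D_{-1}, z ≠ 0). Then the centralizer of z in A₁ equals K[z]. -/

import Mathlib

/-- The defining relation of the first Weyl algebra: `p q = q p + 1`,
where `p` and `q` are the images of the generators `0` and `1`. -/
inductive WeylRel (K : Type) [Field K] :
    FreeAlgebra K (Fin 2) → FreeAlgebra K (Fin 2) → Prop
  | rel : WeylRel K (FreeAlgebra.ι K 0 * FreeAlgebra.ι K 1)
      (FreeAlgebra.ι K 1 * FreeAlgebra.ι K 0 + 1)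

/-- The first Weyl algebra `A₁` over `K`. -/
abbrev Weyl (K : Type) [Field K] := RingQuot (WeylRel K)

/-- The generator `p` of `A₁`. -/
noncomputable def Wp (K : Type) [Field K] : Weyl K :=
  RingQuot.mkAlgHom K (WeylRel K) (FreeAlgebra.ι K 0)

/-- The generator `q` of `A₁`. -/
noncomputable def Wq (K : Type) [Field K] : Weyl K :=
  RingQuot.mkAlgHom K (WeylRel K) (FreeAlgebra.ι K 1)

/-- The homogeneous component `D_t = span{p^i q^s : s - i = t}` of `A₁`. -/
noncomputable def WeylD (K : Type) [Field K] (t : ℤ) : Submodule K (Weyl K) :=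
  Submodule.span K {x | ∃ i s : ℕ, (s : ℤ) - (i : ℤ) = t ∧ x = Wp K ^ i * Wq K ^ s}

/-!
The spaces `D_t` lie in the eigenspaces of `ad (p q)` for distinct eigenvalues, so `A₁ = ⨁ D_t` and
every homogeneous component of an element commuting with the homogeneous `z` commutes with `z`.
Each `u ∈ D_t` has the form `p ^ m f(p q) q ^ s`; acting on Laurent monomials it sends `x ^ n` to
`c_u(n) x ^ (n + t)`, where `c_u` is a polynomial function of `n`, nonzero when `u ≠ 0`.
If `z ∈ D_e` with `e = ±1` commutes with `u ∈ D_t`, then `c_z(n + t) c_u(n) = c_u(n + e) c_z(n)`,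
a first-order recursion for `c_u` at large `n`; so `u` is determined by a single value of `c_u`,
and as `z ^ k` commutes with `z`, the commuting elements of `D_{k e}` are the multiples of `z ^ k`.
For `u ∈ D_{-k e}` with `k > 0`, the product `u z ^ k` is then a scalar; its factor of negative
degree kills `x ^ 0`, so that scalar is `0`, and `u = 0` because `A₁` has no homogeneous zero
divisors.
-/

open Polynomial Filter

attribute [local instance] LieRing.ofAssociativeRing

section General

variable {R A : Type*} [CommRing R] [Ring A] [Algebra R A]

theorem mul_mem_eigenspace_ad {c x y : A} {a b : R}
    (hx : x ∈ (LieAlgebra.ad R A c).eigenspace a) (hy : y ∈ (LieAlgebra.ad R A c).eigenspace b) :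
    x * y ∈ (LieAlgebra.ad R A c).eigenspace (a + b) := by
  rw [Module.End.mem_eigenspace_iff, LieAlgebra.ad_apply, Ring.lie_def] at *
  calc c * (x * y) - x * y * c = (c * x - x * c) * y + x * (c * y - y * c) := by noncomm_ring
    _ = (a + b) • (x * y) := by rw [hx, hy, smul_mul_assoc, mul_smul_comm, add_smul]

theorem pow_mem_eigenspace_ad {c x : A} {a : R} (hx : x ∈ (LieAlgebra.ad R A c).eigenspace a)
    (k : ℕ) : x ^ k ∈ (LieAlgebra.ad R A c).eigenspace (k * a) := by
  induction k with
  | zero => simp [Ring.lie_def]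
  | succ k ih =>
    rw [pow_succ, Nat.cast_succ, add_one_mul]
    exact mul_mem_eigenspace_ad ih hx

end General

theorem commute_decompose_of_mem {ι A σ : Type*} [DecidableEq ι] [AddCancelCommMonoid ι]
    [Semiring A] [SetLike σ A] [AddSubmonoidClass σ A] (𝒜 : ι → σ) [GradedRing 𝒜]
    {z w : A} {e : ι} (hz : z ∈ 𝒜 e) (h : Commute z w) (t : ι) :
    Commute z (DirectSum.decompose 𝒜 w t) := by
  rw [Commute, SemiconjBy, ← DirectSum.coe_decompose_mul_add_of_left_mem 𝒜 hz,
    ← DirectSum.coe_decompose_mul_add_of_right_mem 𝒜 hz, h.eq, add_comm]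

theorem Polynomial.eventually_eval_intCast_ne_zero {K : Type*} [Field K] [CharZero K] {P : K[X]}
    (hP : P ≠ 0) : ∀ᶠ n : ℤ in atTop, P.eval (n : K) ≠ 0 :=
  Filter.atTop_le_cofinite <| Filter.eventually_cofinite.2 <| by
    simpa using (finite_setOfPred_isRoot hP).preimage Int.cast_injective.injOn

namespace Weyl

variable {K : Type} [Field K]

theorem Wp_mul_Wq : Wp K * Wq K = Wq K * Wp K + 1 := by
  simpa only [map_mul, map_add, map_one, Wp, Wq] using
    RingQuot.mkAlgHom_rel K (WeylRel.rel (K := K))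

theorem Wq_mul_Wp : Wq K * Wp K = Wp K * Wq K - 1 := by
  rw [Wp_mul_Wq, add_sub_cancel_right]

theorem Wq_pow_succ_mul_Wp (b : ℕ) :
    Wq K ^ (b + 1) * Wp K = Wp K * Wq K ^ (b + 1) - ((b + 1 : ℕ) : K) • Wq K ^ b := by
  induction b with
  | zero => simp [Wq_mul_Wp]
  | succ b ih =>
    rw [pow_succ', mul_assoc, ih, mul_sub, ← mul_assoc, Wq_mul_Wp, mul_smul_comm, ← pow_succ',
      sub_mul, one_mul, mul_assoc, ← pow_succ']
    push_cast
    module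

theorem Wp_mul_Wp_mul_Wq : Wp K * (Wp K * Wq K) = (Wp K * Wq K + 1) * Wp K := by
  rw [add_mul, one_mul, mul_assoc, Wq_mul_Wp, mul_sub, mul_one, sub_add_cancel]

theorem adjoin_Wp_Wq : Algebra.adjoin K {Wp K, Wq K} = ⊤ := by
  rw [eq_top_iff]
  rintro w -
  obtain ⟨y, rfl⟩ := RingQuot.mkAlgHom_surjective K (WeylRel K) w
  induction y using FreeAlgebra.induction with
  | grade0 r => rw [AlgHom.commutes]; exact Subalgebra.algebraMap_mem _ r
  | grade1 i =>
    fin_cases i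
    exacts [Algebra.subset_adjoin (.inl rfl), Algebra.subset_adjoin (.inr rfl)]
  | mul a b ha hb => rw [map_mul]; exact mul_mem ha hb
  | add a b ha hb => rw [map_add]; exact add_mem ha hb

theorem pow_mul_pow_mem_WeylD {i s : ℕ} {t : ℤ} (h : (s : ℤ) - i = t) :
    Wp K ^ i * Wq K ^ s ∈ WeylD K t :=
  Submodule.subset_span ⟨i, s, h, rfl⟩

theorem Wp_mem_WeylD : Wp K ∈ WeylD K (-1) := by
  simpa using pow_mul_pow_mem_WeylD (K := K) (i := 1) (s := 0) (by norm_num)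

theorem Wq_mem_WeylD : Wq K ∈ WeylD K 1 := by
  simpa using pow_mul_pow_mem_WeylD (K := K) (i := 0) (s := 1) (by norm_num)

theorem mul_mem_WeylD_of_forall {c d : ℤ} {x y : Weyl K}
    (h : ∀ i s : ℕ, (s : ℤ) - i = c → Wp K ^ i * Wq K ^ s * y ∈ WeylD K d)
    (hx : x ∈ WeylD K c) : x * y ∈ WeylD K d :=
  (Submodule.span_le (p := (WeylD K d).comap (LinearMap.mulRight K y))).2
    (by rintro _ ⟨i, s, hi, rfl⟩; exact h i s hi) hx

theorem mul_Wq_mem_WeylD {c : ℤ} {x : Weyl K} (hx : x ∈ WeylD K c) :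
    x * Wq K ∈ WeylD K (c + 1) :=
  mul_mem_WeylD_of_forall (fun i s hi => by
    rw [mul_assoc, ← pow_succ]; exact pow_mul_pow_mem_WeylD (by push_cast; omega)) hx

theorem mul_Wp_mem_WeylD {c : ℤ} {x : Weyl K} (hx : x ∈ WeylD K c) :
    x * Wp K ∈ WeylD K (c - 1) := by
  refine mul_mem_WeylD_of_forall (fun i s hi => ?_) hx
  cases s with
  | zero =>
    simpa [← pow_succ] using pow_mul_pow_mem_WeylD (K := K) (i := i + 1) (s := 0) (by omega)
  | succ b =>
    rw [mul_assoc, Wq_pow_succ_mul_Wp, mul_sub, ← mul_assoc, ← pow_succ, mul_smul_comm]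
    exact sub_mem (pow_mul_pow_mem_WeylD (by omega))
      (Submodule.smul_mem _ _ (pow_mul_pow_mem_WeylD (by omega)))

theorem mul_mem_WeylD {i j : ℤ} {a b : Weyl K} (ha : a ∈ WeylD K i) (hb : b ∈ WeylD K j) :
    a * b ∈ WeylD K (i + j) := by
  have hp (k : ℕ) : a * Wp K ^ k ∈ WeylD K (i - k) := by
    induction k with
    | zero => simpa using ha
    | succ k ih =>
      rw [pow_succ, ← mul_assoc]
      convert mul_Wp_mem_WeylD ih using 2
      push_cast; ring
  have hpq (k l : ℕ) : a * Wp K ^ k * Wq K ^ l ∈ WeylD K (i - k + l) := by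
    induction l with
    | zero => simpa using hp k
    | succ l ih =>
      rw [pow_succ, ← mul_assoc]
      convert mul_Wq_mem_WeylD ih using 2
      push_cast; ring
  refine (Submodule.span_le (p := (WeylD K (i + j)).comap (LinearMap.mulLeft K a))).2 ?_ hb
  rintro _ ⟨k, l, hkl, rfl⟩
  show a * (Wp K ^ k * Wq K ^ l) ∈ WeylD K (i + j)
  rw [← mul_assoc, ← hkl, show i + (l - k) = i - k + l by ring]
  exact hpq k l

instance : SetLike.GradedMonoid (WeylD K) where
  one_mem := by simpa using pow_mul_pow_mem_WeylD (K := K) (i := 0) (s := 0) (t := 0) (by simp)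
  mul_mem _ _ _ _ := mul_mem_WeylD

theorem iSup_WeylD_eq_top : ⨆ t, WeylD K t = ⊤ := by
  rw [Submodule.iSup_eq_toSubmodule_range, Algebra.toSubmodule_eq_top, eq_top_iff,
    ← adjoin_Wp_Wq, Algebra.adjoin_le_iff]
  rintro _ (rfl | rfl)
  exacts [⟨DirectSum.of _ (-1) ⟨_, Wp_mem_WeylD⟩, DirectSum.coeAlgHom_of _ _ _⟩,
    ⟨DirectSum.of _ 1 ⟨_, Wq_mem_WeylD⟩, DirectSum.coeAlgHom_of _ _ _⟩]

theorem Wp_mem_eigenspace :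
    Wp K ∈ (LieAlgebra.ad K (Weyl K) (Wp K * Wq K)).eigenspace (-1) := by
  rw [Module.End.mem_eigenspace_iff, LieAlgebra.ad_apply, Ring.lie_def, mul_assoc, Wq_mul_Wp,
    mul_sub, mul_one, sub_sub_cancel_left, neg_one_smul]

theorem Wq_mem_eigenspace : Wq K ∈ (LieAlgebra.ad K (Weyl K) (Wp K * Wq K)).eigenspace 1 := by
  rw [Module.End.mem_eigenspace_iff, LieAlgebra.ad_apply, Ring.lie_def, one_smul,
    ← mul_assoc (Wq K), ← sub_mul, Wp_mul_Wq, add_sub_cancel_left, one_mul]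

theorem WeylD_le_eigenspace (t : ℤ) :
    WeylD K t ≤ (LieAlgebra.ad K (Weyl K) (Wp K * Wq K)).eigenspace (t : K) := by
  refine Submodule.span_le.2 fun x ⟨i, s, hst, hx⟩ => ?_
  rw [SetLike.mem_coe, hx, ← hst]
  convert mul_mem_eigenspace_ad (pow_mem_eigenspace_ad (Wp_mem_eigenspace (K := K)) i)
    (pow_mem_eigenspace_ad Wq_mem_eigenspace s) using 2
  push_cast; ring

theorem exists_Wp_mul_eq_mul_Wp {x : Weyl K} (hx : x ∈ Algebra.adjoin K {Wp K * Wq K}) :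
    ∃ y ∈ Algebra.adjoin K {Wp K * Wq K}, Wp K * x = y * Wp K := by
  induction hx using Algebra.adjoin_induction with
  | mem x hx =>
    rw [Set.mem_singleton_iff.1 hx]
    exact ⟨_, add_mem (Algebra.self_mem_adjoin_singleton K _) (one_mem _), Wp_mul_Wp_mul_Wq⟩
  | algebraMap r => exact ⟨_, Subalgebra.algebraMap_mem _ r, (Algebra.commutes r _).symm⟩
  | add x y _ _ hx hy =>
    obtain ⟨x', hx', ex⟩ := hx
    obtain ⟨y', hy', ey⟩ := hy
    exact ⟨x' + y', add_mem hx' hy', by rw [mul_add, add_mul, ex, ey]⟩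
  | mul x y _ _ hx hy =>
    obtain ⟨x', hx', ex⟩ := hx
    obtain ⟨y', hy', ey⟩ := hy
    exact ⟨x' * y', mul_mem hx' hy', by rw [← mul_assoc, ex, mul_assoc, ey, mul_assoc]⟩

theorem Wp_pow_mul_Wq_pow_mem_adjoin (i : ℕ) :
    Wp K ^ i * Wq K ^ i ∈ Algebra.adjoin K {Wp K * Wq K} := by
  induction i with
  | zero => simp
  | succ i ih =>
    obtain ⟨y, hy, hpy⟩ := exists_Wp_mul_eq_mul_Wp ih
    rw [pow_succ', pow_succ, ← mul_assoc, mul_assoc (Wp K), hpy, mul_assoc]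
    exact mul_mem hy (Algebra.self_mem_adjoin_singleton K _)

theorem exists_eq_Wp_pow_mul_aeval_mul_Wq_pow {t : ℤ} {u : Weyl K} (hu : u ∈ WeylD K t) :
    ∃ F : K[X], u = Wp K ^ (-t).toNat * aeval (Wp K * Wq K) F * Wq K ^ t.toNat := by
  have hle : WeylD K t ≤ (Subalgebra.toSubmodule (Algebra.adjoin K {Wp K * Wq K})).map
      (LinearMap.mulLeftRight K (Wp K ^ (-t).toNat, Wq K ^ t.toNat)) := by
    refine Submodule.span_le.2 fun x ⟨i, s, hst, hx⟩ => ?_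
    obtain ⟨r, rfl, rfl⟩ : ∃ r, i = (-t).toNat + r ∧ s = r + t.toNat :=
      ⟨min i s, by omega, by omega⟩
    refine ⟨_, Wp_pow_mul_Wq_pow_mem_adjoin r, ?_⟩
    rw [hx, LinearMap.mulLeftRight_apply, pow_add, pow_add]
    simp only [mul_assoc]
  obtain ⟨v, hv, rfl⟩ := hle hu
  rw [SetLike.mem_coe, Subalgebra.mem_toSubmodule, Algebra.adjoin_singleton_eq_range_aeval] at hv
  obtain ⟨F, rfl⟩ := hv
  exact ⟨F, rfl⟩

/-- `Finsupp.single n 1` stands for the Laurent monomial `x ^ n`: `A₁` acts on `K[x, x⁻¹]` with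
`q` as multiplication by `x` and `p` as `d / dx`. -/
noncomputable def mulXOp : Module.End K (ℤ →₀ K) := Finsupp.lmapDomain K K (· + 1)

noncomputable def derivOp : Module.End K (ℤ →₀ K) :=
  Finsupp.lsum K fun n : ℤ => (n : K) • Finsupp.lsingle (n - 1)

@[simp]
theorem mulXOp_single (n : ℤ) (c : K) :
    mulXOp (Finsupp.single n c) = Finsupp.single (n + 1) c := by
  simp [mulXOp]

@[simp]
theorem derivOp_single (n : ℤ) (c : K) :
    derivOp (Finsupp.single n c) = (n : K) • Finsupp.single (n - 1) c := by
  simp [derivOp]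

theorem derivOp_mul_mulXOp :
    derivOp * mulXOp = mulXOp * derivOp + (1 : Module.End K (ℤ →₀ K)) := by
  refine Finsupp.lhom_ext fun n c => ?_
  rw [Module.End.mul_apply, LinearMap.add_apply, Module.End.mul_apply, mulXOp_single,
    derivOp_single, derivOp_single, map_smul, mulXOp_single, Module.End.one_apply,
    add_sub_cancel_right, sub_add_cancel]
  push_cast
  rw [add_smul, one_smul]

noncomputable def rep : Weyl K →ₐ[K] Module.End K (ℤ →₀ K) :=
  RingQuot.liftAlgHom K ⟨FreeAlgebra.lift K ![derivOp, mulXOp], by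
    rintro _ _ ⟨⟩
    simpa using derivOp_mul_mulXOp⟩

theorem rep_Wp : rep (Wp K) = derivOp := by simp [rep, Wp]

theorem rep_Wq : rep (Wq K) = mulXOp := by simp [rep, Wq]

instance : Nontrivial (Weyl K) :=
  (rep (K := K)).toRingHom.domain_nontrivial

theorem rep_Wq_pow_single (s : ℕ) (n : ℤ) (c : K) :
    rep (Wq K ^ s) (Finsupp.single n c) = Finsupp.single (n + s) c := by
  induction s generalizing n with
  | zero => simp
  | succ s ih =>
    rw [pow_succ, map_mul, Module.End.mul_apply, rep_Wq, mulXOp_single, ih]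
    push_cast; ring_nf

theorem rep_Wp_pow_single (m : ℕ) (n : ℤ) (c : K) :
    rep (Wp K ^ m) (Finsupp.single n c) =
      (descPochhammer K m).eval (n : K) • Finsupp.single (n - m) c := by
  induction m generalizing n with
  | zero => simp
  | succ m ih =>
    rw [pow_succ, map_mul, Module.End.mul_apply, rep_Wp, derivOp_single, map_smul, ih, smul_smul,
      descPochhammer_succ_left]
    simp only [eval_mul, eval_X, eval_comp, eval_sub, eval_one]
    push_cast
    ring_nf

theorem rep_aeval_single (F : K[X]) (n : ℤ) (c : K) :
    rep (aeval (Wp K * Wq K) F) (Finsupp.single n c) =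
      F.eval ((n : K) + 1) • Finsupp.single n c := by
  rw [← Polynomial.aeval_algHom_apply]
  refine Module.End.aeval_apply_of_mem_apply_eq_smul ?_
  simp [rep_Wp, rep_Wq]

theorem rep_Wp_pow_mul_aeval_mul_Wq_pow_single (m s : ℕ) (F : K[X]) (n : ℤ) :
    rep (Wp K ^ m * aeval (Wp K * Wq K) F * Wq K ^ s) (Finsupp.single n 1) =
      (F.eval ((n + s : K) + 1) * (descPochhammer K m).eval (n + s : K)) •
        Finsupp.single (n + s - m) 1 := by
  rw [map_mul, map_mul, Module.End.mul_apply, Module.End.mul_apply, rep_Wq_pow_single,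
    rep_aeval_single, map_smul, rep_Wp_pow_single, smul_smul]
  push_cast; ring_nf

theorem exists_polynomial_rep_single {t : ℤ} {u : Weyl K} (hu : u ∈ WeylD K t) :
    ∃ P : K[X], (u ≠ 0 → P ≠ 0) ∧
      ∀ n : ℤ, rep u (Finsupp.single n 1) = P.eval (n : K) • Finsupp.single (n + t) 1 := by
  obtain ⟨F, rfl⟩ := exists_eq_Wp_pow_mul_aeval_mul_Wq_pow hu
  refine ⟨taylor ((t.toNat : K) + 1) F * taylor (t.toNat : K) (descPochhammer K (-t).toNat),
    fun hu0 => mul_ne_zero ?_ ?_, fun n => ?_⟩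
  · rw [Ne, taylor_eq_zero]
    rintro rfl
    simp at hu0
  · rw [Ne, taylor_eq_zero]
    exact (monic_descPochhammer K _).ne_zero
  · rw [rep_Wp_pow_mul_aeval_mul_Wq_pow_single, eval_mul, taylor_eval, taylor_eval, add_assoc]
    congr 2
    omega

theorem rep_single_zero_eq_zero_of_mem_neg {m : ℕ} (hm : 0 < m) {u : Weyl K}
    (hu : u ∈ WeylD K (-m)) : rep u (Finsupp.single 0 1) = 0 := by
  obtain ⟨F, rfl⟩ := exists_eq_Wp_pow_mul_aeval_mul_Wq_pow hu
  rw [show (- -(m : ℤ)).toNat = m by omega, show (-(m : ℤ)).toNat = 0 by omega,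
    rep_Wp_pow_mul_aeval_mul_Wq_pow_single]
  simp [descPochhammer_ne_zero_eval_zero K hm.ne']

noncomputable def matrixCoeff (t : ℤ) (u : Weyl K) (n : ℤ) : K :=
  rep u (Finsupp.single n 1) (n + t)

theorem rep_single_of_mem {t : ℤ} {u : Weyl K} (hu : u ∈ WeylD K t) (n : ℤ) :
    rep u (Finsupp.single n 1) = matrixCoeff t u n • Finsupp.single (n + t) 1 := by
  obtain ⟨P, -, hP⟩ := exists_polynomial_rep_single hu
  simp [matrixCoeff, hP]

theorem matrixCoeff_mul {s t : ℤ} {a b : Weyl K} (ha : a ∈ WeylD K s) (hb : b ∈ WeylD K t)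
    (n : ℤ) : matrixCoeff (s + t) (a * b) n = matrixCoeff s a (n + t) * matrixCoeff t b n := by
  rw [matrixCoeff, map_mul, Module.End.mul_apply, rep_single_of_mem hb, map_smul,
    rep_single_of_mem ha, smul_smul, show n + (s + t) = n + t + s by ring]
  simp [mul_comm]

theorem matrixCoeff_commute {z u : Weyl K} {e t : ℤ} (hz : z ∈ WeylD K e) (hu : u ∈ WeylD K t)
    (h : Commute z u) (n : ℤ) :
    matrixCoeff e z (n + t) * matrixCoeff t u n = matrixCoeff t u (n + e) * matrixCoeff e z n := by
  rw [← matrixCoeff_mul hz hu, h.eq, add_comm e t, matrixCoeff_mul hu hz]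

variable [CharZero K]

theorem iSupIndep_WeylD : iSupIndep (WeylD K) :=
  ((Module.End.eigenspaces_iSupIndep _).comp Int.cast_injective).mono WeylD_le_eigenspace

noncomputable instance : GradedAlgebra (WeylD K) :=
  { (inferInstance : SetLike.GradedMonoid (WeylD K)),
    (DirectSum.isInternal_submodule_of_iSupIndep_of_iSup_eq_top iSupIndep_WeylD
      iSup_WeylD_eq_top).chooseDecomposition with }

theorem eventually_matrixCoeff_ne_zero {t : ℤ} {u : Weyl K} (hu : u ∈ WeylD K t) (hu0 : u ≠ 0) :
    ∀ᶠ n in atTop, matrixCoeff t u n ≠ 0 := by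
  obtain ⟨P, hP0, hP⟩ := exists_polynomial_rep_single hu
  filter_upwards [eventually_eval_intCast_ne_zero (hP0 hu0)] with n hn
  simpa [matrixCoeff, hP] using hn

theorem mul_ne_zero_of_mem {s t : ℤ} {a b : Weyl K} (ha : a ∈ WeylD K s) (hb : b ∈ WeylD K t)
    (ha0 : a ≠ 0) (hb0 : b ≠ 0) : a * b ≠ 0 := by
  intro hab
  obtain ⟨n, han, hbn⟩ := ((tendsto_atTop_add_const_right _ t tendsto_id).eventually
    (eventually_matrixCoeff_ne_zero ha ha0) |>.and (eventually_matrixCoeff_ne_zero hb hb0)).exists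
  have := matrixCoeff_mul ha hb n
  rw [hab, matrixCoeff, map_zero] at this
  exact mul_ne_zero han hbn this.symm

theorem pow_ne_zero_of_mem {e : ℤ} {z : Weyl K} (hz : z ∈ WeylD K e) (hz0 : z ≠ 0) (k : ℕ) :
    z ^ k ≠ 0 := by
  induction k with
  | zero => rw [pow_zero]; exact one_ne_zero
  | succ k ih => rw [pow_succ]; exact mul_ne_zero_of_mem (SetLike.pow_mem_graded k hz) hz ih hz0

section Centralizer

variable {z : Weyl K} {e : ℤ}

/-- For `e = ±1`, `matrixCoeff_commute` determines `matrixCoeff t u (n + 1)` from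
`matrixCoeff t u n` once `n` is large enough for the coefficients of `z` involved to be nonzero. -/
theorem eventually_eq_zero_of_matrixCoeff_eq_zero (he : e = 1 ∨ e = -1) (hz : z ∈ WeylD K e)
    (hz0 : z ≠ 0) (t : ℤ) :
    ∀ᶠ N in atTop, ∀ u ∈ WeylD K t, Commute z u → matrixCoeff t u N = 0 → u = 0 := by
  have hev : ∀ᶠ n in atTop, matrixCoeff e z n ≠ 0 ∧ matrixCoeff e z (n + t + 1) ≠ 0 :=
    (eventually_matrixCoeff_ne_zero hz hz0).and <|
      (tendsto_atTop_add_const_right _ (t + 1) tendsto_id).eventually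
        (eventually_matrixCoeff_ne_zero hz hz0) |>.mono fun n hn => by rwa [add_assoc]
  obtain ⟨N₀, hN₀⟩ := eventually_atTop.1 hev
  filter_upwards [eventually_ge_atTop N₀] with N hN u hu hzu huN
  by_contra hu0
  have hzero : ∀ n ≥ N, matrixCoeff t u n = 0 := by
    intro n hn
    induction n, hn using Int.leInduction with
    | base => exact huN
    | succ n hn ih =>
      obtain ⟨h1, h2⟩ := hN₀ n (hN.trans hn)
      rcases he with rfl | rfl
      · have := matrixCoeff_commute hz hu hzu n
        rw [ih, mul_zero, eq_comm, mul_eq_zero] at this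
        exact this.resolve_right h1
      · have := matrixCoeff_commute hz hu hzu (n + 1)
        rw [add_neg_cancel_right, ih, zero_mul, mul_eq_zero, add_right_comm] at this
        exact this.resolve_left h2
  obtain ⟨n, hn, hnN⟩ :=
    ((eventually_matrixCoeff_ne_zero hu hu0).and (eventually_ge_atTop N)).exists
  exact hn (hzero n hnN)

theorem exists_eq_smul_of_commute (he : e = 1 ∨ e = -1) (hz : z ∈ WeylD K e) (hz0 : z ≠ 0)
    {t : ℤ} {u v : Weyl K} (hu : u ∈ WeylD K t) (hv : v ∈ WeylD K t) (hv0 : v ≠ 0)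
    (hzu : Commute z u) (hzv : Commute z v) : ∃ c : K, u = c • v := by
  obtain ⟨N, hN, hvN⟩ := ((eventually_eq_zero_of_matrixCoeff_eq_zero he hz hz0 t).and
    (eventually_matrixCoeff_ne_zero hv hv0)).exists
  refine ⟨matrixCoeff t u N / matrixCoeff t v N, sub_eq_zero.1 <|
    hN _ (sub_mem hu (Submodule.smul_mem _ _ hv)) (hzu.sub_right (hzv.smul_right _)) ?_⟩
  simp only [matrixCoeff] at hvN ⊢
  simp [div_mul_cancel₀ _ hvN]

theorem exists_eq_smul_pow_of_commute (he : e = 1 ∨ e = -1) (hz : z ∈ WeylD K e) (hz0 : z ≠ 0)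
    (k : ℕ) {u : Weyl K} (hu : u ∈ WeylD K (k * e)) (hzu : Commute z u) :
    ∃ c : K, u = c • z ^ k :=
  exists_eq_smul_of_commute he hz hz0 hu (by simpa using SetLike.pow_mem_graded k hz)
    (pow_ne_zero_of_mem hz hz0 k) hzu (Commute.self_pow z k)

theorem eq_zero_of_commute_of_neg (he : e = 1 ∨ e = -1) (hz : z ∈ WeylD K e) (hz0 : z ≠ 0)
    {k : ℕ} (hk : 0 < k) {u : Weyl K} (hu : u ∈ WeylD K (-(k * e))) (hzu : Commute z u) :
    u = 0 := by
  have hzk : z ^ k ∈ WeylD K (k * e) := by simpa using SetLike.pow_mem_graded k hz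
  obtain ⟨c, hc⟩ := exists_eq_smul_pow_of_commute he hz hz0 0
    (by simpa using mul_mem_WeylD hu hzk) (hzu.mul_right (Commute.self_pow z k))
  have hrep : rep (u * z ^ k) (Finsupp.single 0 1) = 0 := by
    rcases he with rfl | rfl
    · rw [← (hzu.pow_left k).eq, map_mul, Module.End.mul_apply,
        rep_single_zero_eq_zero_of_mem_neg hk (by simpa using hu), map_zero]
    · rw [map_mul, Module.End.mul_apply,
        rep_single_zero_eq_zero_of_mem_neg hk (by simpa using hzk), map_zero]
  rw [hc, pow_zero] at hrep
  have hc0 : c = 0 := by simpa using hrep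
  by_contra hu0
  exact mul_ne_zero_of_mem hu hzk hu0 (pow_ne_zero_of_mem hz hz0 k) (by rw [hc, hc0, zero_smul])

theorem mem_adjoin_of_commute (he : e = 1 ∨ e = -1) (hz : z ∈ WeylD K e) (hz0 : z ≠ 0) {t : ℤ}
    {u : Weyl K} (hu : u ∈ WeylD K t) (hzu : Commute z u) : u ∈ Algebra.adjoin K {z} := by
  obtain ⟨k, rfl⟩ | ⟨k, hk, rfl⟩ : (∃ k : ℕ, t = k * e) ∨ ∃ k : ℕ, 0 < k ∧ t = -(k * e) := by
    rcases le_or_gt 0 (t * e) with ht | ht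
    · exact .inl ⟨(t * e).toNat, by rcases he with rfl | rfl <;> omega⟩
    · exact .inr ⟨(-(t * e)).toNat, by omega, by rcases he with rfl | rfl <;> omega⟩
  · obtain ⟨c, rfl⟩ := exists_eq_smul_pow_of_commute he hz hz0 k hu hzu
    exact Subalgebra.smul_mem _ (Subalgebra.pow_mem _ (Algebra.self_mem_adjoin_singleton K z) k) c
  · rw [eq_zero_of_commute_of_neg he hz hz0 hk hu hzu]
    exact zero_mem _

end Centralizer

end Weyl

/-- If `z` is a nonzero homogeneous element of degree `1` or `-1` in `A₁`, then the
centralizer of `z` in `A₁` equals `K[z]`. -/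
theorem weyl_centralizer_of_degree_pm_one (K : Type) [Field K] [CharZero K]
    (z : Weyl K) (hz : z ≠ 0) (hhom : z ∈ WeylD K 1 ∨ z ∈ WeylD K (-1)) :
    {w : Weyl K | z * w = w * z} = ↑(Algebra.adjoin K {z}) := by
  obtain ⟨e, he, hze⟩ : ∃ e : ℤ, (e = 1 ∨ e = -1) ∧ z ∈ WeylD K e := by
    rcases hhom with h | h
    exacts [⟨1, .inl rfl, h⟩, ⟨-1, .inr rfl, h⟩]
  ext w
  refine ⟨fun hw => ?_, fun hw => Algebra.commute_of_mem_adjoin_self hw⟩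
  classical
  rw [SetLike.mem_coe, ← DirectSum.sum_support_decompose (WeylD K) w]
  exact sum_mem fun t _ => Weyl.mem_adjoin_of_commute he hze hz (SetLike.coe_mem _)
    (commute_decompose_of_mem (WeylD K) hze hw t)
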